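/- In the discrete diffusion-with-label model, the label is conditionally independent of the noisier state given the less-noisy state and the history: for every i with 1 ≤ i ≤ T, every a, b ∈ S, h ∈ H, c ∈ C such that the marginals P(x i = b, x (i−1) = a, h) > 0 and P(x (i−1) = a, h) > 0, one has P(c ∣ x i = b, x (i−1) = a, h) = P(c ∣ x (i−1) = a, h); in particular the left-hand side does not depend on b. -/

import Mathlib

/-!
Appending a noising step multiplies the joint mass by one transition probability,
`P (snoc y s) = P y * kappa (y last) s`. Since each row of `kappa` sums to one, summing out
the steps after `i` leaves the marginal unchanged, so the mass of `x (i-1) = a, x i = b`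
with history `h` and label `c` is `kappa a b` times that of `x (i-1) = a`. The common factor
`kappa a b`, which is nonzero because the conditioning event has positive mass, cancels in
the conditional probability of the label.
-/

open Finset

/-- Joint probability mass function of the discrete diffusion-with-label model. -/
noncomputable def P {H S C : Type*} [Fintype S] (T : ℕ)
    (pi : H → ℝ) (rho : H → S → ℝ) (lab : H → S → C → ℝ) (kappa : S → S → ℝ)
    (h : H) (x : Fin (T + 1) → S) (c : C) : ℝ :=
  pi h * rho h (x 0) * lab h (x 0) c * ∏ i : Fin T, kappa (x i.castSucc) (x i.succ)

theorem Fin.sum_univ_pi_succ_eq_sum_snoc {S M : Type*} [Fintype S] [AddCommMonoid M]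
    {n : ℕ} (g : (Fin (n + 1) → S) → M) :
    ∑ x, g x = ∑ y : Fin n → S, ∑ s : S, g (Fin.snoc y s) := by
  rw [← (Fin.snocEquiv fun _ => S).sum_comp, Fintype.sum_prod_type, Finset.sum_comm]
  rfl

theorem Finset.mul_div_sum_mul_left {ι K : Type*} [Field K] (s : Finset ι) (k : K)
    (f : ι → K) (i : ι) (hsum : ∑ j ∈ s, k * f j ≠ 0) :
    k * f i / ∑ j ∈ s, k * f j = f i / ∑ j ∈ s, f j := by
  rw [← Finset.mul_sum] at hsum ⊢
  exact mul_div_mul_left _ _ (left_ne_zero_of_mul hsum)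

section DiffusionModel

variable {H S C : Type*} [Fintype S]
  (pi : H → ℝ) (rho : H → S → ℝ) (lab : H → S → C → ℝ) (kappa : S → S → ℝ)

theorem P_snoc (T : ℕ) (h : H) (y : Fin (T + 1) → S) (s : S) (c : C) :
    P (T + 1) pi rho lab kappa h (Fin.snoc y s) c
      = P T pi rho lab kappa h y c * kappa (y (Fin.last T)) s := by
  simp only [P, Fin.prod_univ_castSucc, Fin.succ_castSucc, Fin.snoc_castSucc, Fin.succ_last,
    Fin.snoc_last]
  rw [show (0 : Fin (T + 2)) = Fin.castSucc 0 from rfl, Fin.snoc_castSucc]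
  ring

theorem sum_filter_P_succ_eq_sum_snoc (T : ℕ) (h : H) (c : C)
    (p : (Fin (T + 2) → S) → Prop) [DecidablePred p] :
    ∑ x ∈ univ.filter p, P (T + 1) pi rho lab kappa h x c
      = ∑ y : Fin (T + 1) → S, ∑ s : S,
          if p (Fin.snoc y s) then P T pi rho lab kappa h y c * kappa (y (Fin.last T)) s
          else 0 := by
  simp only [sum_filter, Fin.sum_univ_pi_succ_eq_sum_snoc, P_snoc]

variable {kappa}

theorem sum_filter_P_succ_of_iff_init (hks : ∀ a, ∑ b, kappa a b = 1) (T : ℕ) (h : H) (c : C)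
    (p : (Fin (T + 2) → S) → Prop) (q : (Fin (T + 1) → S) → Prop)
    [DecidablePred p] [DecidablePred q] (hpq : ∀ x, p x ↔ q (Fin.init x)) :
    ∑ x ∈ univ.filter p, P (T + 1) pi rho lab kappa h x c
      = ∑ y ∈ univ.filter q, P T pi rho lab kappa h y c := by
  rw [sum_filter_P_succ_eq_sum_snoc, sum_filter]
  refine sum_congr rfl fun y _ => ?_
  simp only [hpq, Fin.init_snoc]
  split_ifs
  · rw [← mul_sum, hks, mul_one]
  · exact sum_const_zero

theorem sum_filter_P_succ_castSucc_eq_mul [DecidableEq S] (hks : ∀ a, ∑ b, kappa a b = 1)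
    (h : H) (c : C) {T : ℕ} (j : Fin T) (a b : S) :
    ∑ x ∈ univ.filter (fun x : Fin (T + 1) → S => x j.succ = b ∧ x j.castSucc = a),
        P T pi rho lab kappa h x c
      = kappa a b * ∑ x ∈ univ.filter (fun x : Fin (T + 1) → S => x j.castSucc = a),
          P T pi rho lab kappa h x c := by
  induction T with
  | zero => exact j.elim0
  | succ T ih =>
    induction j using Fin.lastCases with
    | last =>
      rw [sum_filter_P_succ_of_iff_init pi rho lab hks T h c
          (fun x => x (Fin.last T).castSucc = a) (fun y => y (Fin.last T) = a) (fun _ => Iff.rfl),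
        sum_filter_P_succ_eq_sum_snoc, mul_sum, sum_filter]
      refine sum_congr rfl fun y _ => ?_
      simp only [Fin.succ_last, Fin.snoc_last, Fin.snoc_castSucc]
      by_cases hy : y (Fin.last T) = a <;> simp [hy, mul_comm]
    | cast j =>
      simp only [Fin.succ_castSucc]
      rw [sum_filter_P_succ_of_iff_init pi rho lab hks T h c
          (fun x => x j.succ.castSucc = b ∧ x j.castSucc.castSucc = a)
          (fun y => y j.succ = b ∧ y j.castSucc = a) (fun _ => Iff.rfl),
        sum_filter_P_succ_of_iff_init pi rho lab hks T h c (fun x => x j.castSucc.castSucc = a)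
          (fun y => y j.castSucc = a) (fun _ => Iff.rfl), ih]

end DiffusionModel

/-- The label is conditionally independent of the noisier state given the less-noisy
state and the history: `P(c ∣ x i = b, x (i−1) = a, h) = P(c ∣ x (i−1) = a, h)`. -/
theorem label_indep_of_noisier_state {H S C : Type*} [Fintype S] [Fintype C]
    [DecidableEq S]
    (T : ℕ)
    (pi : H → ℝ) (rho : H → S → ℝ) (lab : H → S → C → ℝ) (kappa : S → S → ℝ)
    (hks : ∀ a, ∑ b, kappa a b = 1)
    (i : ℕ) (hi1 : 1 ≤ i) (hi2 : i ≤ T) (a b : S) (h : H) (c : C)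
    (hpos1 : 0 < ∑ c' : C, ∑ x ∈ univ.filter (fun x : Fin (T + 1) → S =>
        x ⟨i, by omega⟩ = b ∧ x ⟨i - 1, by omega⟩ = a), P T pi rho lab kappa h x c') :
    (∑ x ∈ univ.filter (fun x : Fin (T + 1) → S =>
        x ⟨i, by omega⟩ = b ∧ x ⟨i - 1, by omega⟩ = a), P T pi rho lab kappa h x c) /
      (∑ c' : C, ∑ x ∈ univ.filter (fun x : Fin (T + 1) → S =>
        x ⟨i, by omega⟩ = b ∧ x ⟨i - 1, by omega⟩ = a), P T pi rho lab kappa h x c') =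
    (∑ x ∈ univ.filter (fun x : Fin (T + 1) → S => x ⟨i - 1, by omega⟩ = a),
        P T pi rho lab kappa h x c) /
      (∑ c' : C, ∑ x ∈ univ.filter (fun x : Fin (T + 1) → S => x ⟨i - 1, by omega⟩ = a),
        P T pi rho lab kappa h x c') := by
  set j : Fin T := ⟨i - 1, by omega⟩
  have hsucc : (⟨i, by omega⟩ : Fin (T + 1)) = j.succ := Fin.ext (by simp [j]; omega)
  have hcastSucc : (⟨i - 1, by omega⟩ : Fin (T + 1)) = j.castSucc := rfl
  simp only [hsucc, hcastSucc, sum_filter_P_succ_castSucc_eq_mul pi rho lab hks] at hpos1 ⊢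
  exact mul_div_sum_mul_left _ _ _ _ hpos1.ne'
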